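/- arXiv:2411.04875 — 5 statements merged into one kernel-verified Lean document; each statement's English description precedes it below -/
import Mathlib

section
/- Let A be a unital C*-algebra, a a nonzero positive element of A with a ≥ 1, and x ∈ A such that a·x is self-adjoint with spectrum contained in [0,∞) (i.e. a·x ≥ 0). If φ : [0,∞) → ℝ is continuous and convex with φ(0) = 0, then for every f ∈ S_a(A) one has f(φ(a·x)) ≥ φ(f(a·x)), where φ(a·x) is defined by continuous functional calculus. -/
/-!
Write `y = a * x`. A continuous convex function on `[0, ∞)` is the supremum of its affine minorants
`u ↦ k * u + c`, so it suffices to bound `f (φ y)` below by `k * f y + c` for each of them. Positivity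
of `f` and monotonicity of the functional calculus give `f (φ y) ≥ k * f y + c * f 1`, and
`c ≤ φ 0 = 0` together with `f 1 ≤ f a = 1` gives `c * f 1 ≥ c`.
-/

open scoped ComplexOrder

section

variable {A : Type*} [CStarAlgebra A] [PartialOrder A] [StarOrderedRing A]

def IsPosLF (f : A →ₗ[ℂ] ℂ) : Prop := ∀ x : A, 0 ≤ f (star x * x)

/-- Membership in `S_a(A)`. -/
def MemSa (a : A) (f : A →ₗ[ℂ] ℂ) : Prop := IsPosLF f ∧ f a = 1

namespace IsPosLF

variable {f : A →ₗ[ℂ] ℂ}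

lemma map_nonneg (hf : IsPosLF f) {z : A} (hz : 0 ≤ z) : 0 ≤ f z := by
  obtain ⟨b, rfl⟩ := CStarAlgebra.nonneg_iff_eq_star_mul_self.mp hz
  exact hf b

lemma monotone (hf : IsPosLF f) : Monotone f := fun z w hzw => by
  simpa [sub_nonneg] using hf.map_nonneg (sub_nonneg.mpr hzw)

lemma re_mono (hf : IsPosLF f) {z w : A} (hzw : z ≤ w) : (f z).re ≤ (f w).re :=
  Complex.re_le_re (hf.monotone hzw)

lemma affine_le_re_cfc (hf : IsPosLF f) {y : A} (hy : IsSelfAdjoint y) {φ : ℝ → ℝ}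
    (hφ : ContinuousOn φ (spectrum ℝ y)) {k c : ℝ} (hkc : ∀ u ∈ spectrum ℝ y, k * u + c ≤ φ u) :
    k * (f y).re + c * (f 1).re ≤ (f (cfc φ y)).re := by
  have hcfc : cfc (fun u : ℝ => k * u + c) y = k • y + c • (1 : A) := by
    rw [cfc_add_const c (k * ·) y, cfc_const_mul_id k y, Algebra.algebraMap_eq_smul_one]
  have hle := hf.re_mono (cfc_mono hkc (by fun_prop) hφ)
  rw [hcfc, map_add, LinearMap.map_smul_of_tower, LinearMap.map_smul_of_tower] at hle
  simpa using hle

end IsPosLF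

theorem jensen_memSa_general (a : A) (ha1 : 1 ≤ a)
    (x : A) (hax : 0 ≤ a * x)
    (φ : ℝ → ℝ) (hcont : ContinuousOn φ (Set.Ici 0))
    (hconv : ConvexOn ℝ (Set.Ici 0) φ) (hφ0 : φ 0 = 0)
    (f : A →ₗ[ℂ] ℂ) (hf : MemSa a f) :
    φ ((f (a * x)).re) ≤ (f (cfc φ (a * x))).re := by
  obtain ⟨hfpos, hfa⟩ := hf
  have hspec : spectrum ℝ (a * x) ⊆ Set.Ici 0 := fun u hu => spectrum_nonneg_of_nonneg hax hu
  have hs : (f (a * x)).re ∈ Set.Ici 0 := by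
    simpa using Complex.re_le_re (hfpos.map_nonneg hax)
  have hf1 : (f 1).re ≤ 1 := by simpa [hfa] using hfpos.re_mono ha1
  refine le_of_forall_lt_imp_le_of_dense fun b hb => ?_
  obtain ⟨k, c, hkc, rfl⟩ := hconv.exists_affine_le_of_lt_real hs hb isClosed_Ici
    hcont.lowerSemicontinuousOn
  have hc : c ≤ 0 := by simpa [hφ0] using hkc 0 Set.self_mem_Ici
  have hbound := hfpos.affine_le_re_cfc (IsSelfAdjoint.of_nonneg hax) (hcont.mono hspec)
    fun u hu => hkc u (hspec hu)
  linarith [mul_le_mul_of_nonpos_left hf1 hc]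

/-- if `a ≥ 1`, `a·x ≥ 0`, and `φ` is continuous and convex on `[0,∞)`
with `φ 0 = 0`, then `f(φ(a·x)) ≥ φ(f(a·x))` for every `f ∈ S_a(A)`, where `φ(a·x)` is
given by the continuous functional calculus. -/
theorem jensen_memSa (a : A) (ha : 0 ≤ a) (ha0 : a ≠ 0) (ha1 : 1 ≤ a)
    (x : A) (hax : 0 ≤ a * x)
    (φ : ℝ → ℝ) (hcont : ContinuousOn φ (Set.Ici 0))
    (hconv : ConvexOn ℝ (Set.Ici 0) φ) (hφ0 : φ 0 = 0)
    (f : A →ₗ[ℂ] ℂ) (hf : MemSa a f) :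
    φ ((f (a * x)).re) ≤ (f (cfc φ (a * x))).re :=
  jensen_memSa_general a ha1 x hax φ hcont hconv hφ0 f hf

end
end

section
/- Let A be a unital C*-algebra, a a nonzero positive element of A, and f ∈ S_a(A). Let x, y ∈ A with ‖x‖_a < ∞. Then f(y* x* a x y) ≤ ‖x‖_a² · f(y* a y). -/
open scoped ComplexOrder

section

variable {A : Type*} [CStarAlgebra A] [PartialOrder A] [StarOrderedRing A]

/-- The set of values whose supremum is the `a`-seminorm `‖x‖ₐ`. -/
def aNormSet (a x : A) : Set ℝ :=
  {r : ℝ | ∃ f : A →ₗ[ℂ] ℂ, MemSa a f ∧ r = Real.sqrt (f (star x * a * x)).re}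

/-- The `a`-seminorm `‖x‖ₐ = sup {√(f(x* a x)) : f ∈ S_a(A)}`. -/
noncomputable def aNorm (a x : A) : ℝ := sSup (aNormSet a x)

end

/-
For `ε > 0` the functional `z ↦ f (y* z y) + ε f z`, normalised by its value
`f (y* a y) + ε` at `a`, lies in `S_a(A)`. Evaluating it at `x* a x` gives
`f (y* x* a x y) + ε f (x* a x) ≤ ‖x‖ₐ² (f (y* a y) + ε)`, and `ε → 0` yields the claim.
-/

theorem le_of_forall_pos_le_add_mul {K : Type*} [Field K] [LinearOrder K] [IsStrictOrderedRing K]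
    {a b c : K} (h : ∀ ε > 0, a ≤ b + ε * c) : a ≤ b := by
  rcases le_or_gt c 0 with hc | hc
  · linarith [h 1 one_pos, mul_nonpos_of_nonneg_of_nonpos zero_le_one hc]
  · refine le_of_forall_pos_le_add fun ε hε => ?_
    simpa [div_mul_cancel₀ ε hc.ne'] using h (ε / c) (div_pos hε hc)

section

variable {A : Type*} [CStarAlgebra A] {f g : A →ₗ[ℂ] ℂ}

namespace IsPosLF

theorem add (hf : IsPosLF f) (hg : IsPosLF g) : IsPosLF (f + g) :=
  fun z => add_nonneg (hf z) (hg z)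

theorem smul (hf : IsPosLF f) {c : ℂ} (hc : 0 ≤ c) : IsPosLF (c • f) :=
  fun z => mul_nonneg hc (hf z)

theorem memSa_inv_smul {a : A} (hf : IsPosLF f) (ha : 0 < f a) : MemSa a ((f a)⁻¹ • f) :=
  ⟨hf.smul (inv_nonneg.mpr ha.le), by simp [ha.ne']⟩

end IsPosLF

theorem re_le_aNorm_sq {a x : A} (hx : BddAbove (aNormSet a x)) (hf : MemSa a f) :
    (f (star x * a * x)).re ≤ aNorm a x ^ 2 :=
  calc (f (star x * a * x)).re ≤ Real.sqrt (f (star x * a * x)).re ^ 2 :=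
        Real.sq_sqrt' (x := (f (star x * a * x)).re) ▸ le_max_left _ _
    _ ≤ aNorm a x ^ 2 := pow_le_pow_left₀ (Real.sqrt_nonneg _) (le_csSup hx ⟨f, hf, rfl⟩) 2

end

section

variable {A : Type*} [CStarAlgebra A] [PartialOrder A] [StarOrderedRing A]

theorem IsPosLF.map_nonneg_s2 {f : A →ₗ[ℂ] ℂ} (hf : IsPosLF f) {z : A} (hz : 0 ≤ z) : 0 ≤ f z := by
  rw [StarOrderedRing.nonneg_iff] at hz
  induction hz using AddSubmonoid.closure_induction with
  | mem w hw => obtain ⟨s, rfl⟩ := hw; exact hf s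
  | zero => simp
  | add w₁ w₂ _ _ h₁ h₂ => rw [map_add]; exact add_nonneg h₁ h₂

theorem IsPosLF.comp_mulLeftRight {f : A →ₗ[ℂ] ℂ} (hf : IsPosLF f) (y : A) :
    IsPosLF (f ∘ₗ LinearMap.mulLeftRight ℂ (star y, y)) :=
  fun z => hf.map_nonneg_s2 (star_left_conjugate_nonneg (star_mul_self_nonneg z) y)

theorem re_map_conj_add_le_aNorm_sq {a : A} (ha : 0 ≤ a) {f : A →ₗ[ℂ] ℂ} (hf : MemSa a f)
    {x : A} (hx : BddAbove (aNormSet a x)) (y : A) {ε : ℝ} (hε : 0 < ε) :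
    (f (star y * star x * a * x * y)).re + ε * (f (star x * a * x)).re ≤
      aNorm a x ^ 2 * ((f (star y * a * y)).re + ε) := by
  set g := f ∘ₗ LinearMap.mulLeftRight ℂ (star y, y) + (ε : ℂ) • f
  have hyay : 0 ≤ f (star y * a * y) := hf.1.map_nonneg_s2 (star_left_conjugate_nonneg ha y)
  have hga : g a = ((f (star y * a * y)).re + ε : ℝ) := by
    simp [g, hf.2, ← Complex.eq_re_of_ofReal_le hyay]
  have hgpos : 0 < (f (star y * a * y)).re + ε := by
    linarith [Complex.nonneg_iff.mp hyay |>.1]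
  have hgx : g (star x * a * x) = f (star y * star x * a * x * y) + ε * f (star x * a * x) := by
    simp [g, LinearMap.mulLeftRight_apply, mul_assoc]
  have hg : IsPosLF g := (hf.1.comp_mulLeftRight y).add (hf.1.smul (mod_cast hε.le))
  have hbound := re_le_aNorm_sq hx (hg.memSa_inv_smul (by rw [hga]; exact_mod_cast hgpos))
  simp only [LinearMap.smul_apply, smul_eq_mul, hga, hgx, ← Complex.ofReal_inv,
    Complex.re_ofReal_mul, Complex.add_re] at hbound
  rw [inv_mul_le_iff₀ hgpos] at hbound
  linarith

theorem stmt2_general (a : A) (ha : 0 ≤ a)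
    (f : A →ₗ[ℂ] ℂ) (hf : MemSa a f) (x y : A)
    (hx : BddAbove (aNormSet a x)) :
    (f (star y * star x * a * x * y)).re ≤ aNorm a x ^ 2 * (f (star y * a * y)).re := by
  refine le_of_forall_pos_le_add_mul (c := aNorm a x ^ 2 - (f (star x * a * x)).re) fun ε hε => ?_
  linarith [re_map_conj_add_le_aNorm_sq ha hf hx y hε]

/-- `f(y* x* a x y) ≤ ‖x‖ₐ² · f(y* a y)` for `f ∈ S_a(A)`. -/
theorem stmt2 (a : A) (ha : 0 ≤ a) (ha0 : a ≠ 0)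
    (f : A →ₗ[ℂ] ℂ) (hf : MemSa a f) (x y : A)
    (hx : BddAbove (aNormSet a x)) :
    (f (star y * star x * a * x * y)).re ≤ aNorm a x ^ 2 * (f (star y * a * y)).re :=
  stmt2_general a ha f hf x y hx

end
end

section
/- Let A be a unital C*-algebra, x ∈ A, φ an Orlicz function, and 0 ≤ α ≤ 1. Then φ(v(x)²) ≤ ‖α·φ(x*x) + (1 − α)·φ(x x*)‖, where φ(x*x) and φ(x x*) are defined by continuous functional calculus on the positive elements x*x and x x*. -/
/-!
For a state `g`, Cauchy–Schwarz in the GNS space gives `|g x|² ≤ g(x*x)` and `|g x|² ≤ g(xx*)`.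
Since `φ` is monotone and convex, and states satisfy Jensen's inequality `φ(g a) ≤ g(φ(a))` for
`a ≥ 0`, this yields `φ(|g x|²) ≤ g(α φ(x*x) + (1-α) φ(xx*)) ≤ ‖α φ(x*x) + (1-α) φ(xx*)‖`.
Continuity of `φ` carries the bound over to the supremum `v(x)` of the `|g x|`.
-/

open scoped ComplexOrder

section

variable {A : Type*} [CStarAlgebra A] [PartialOrder A] [StarOrderedRing A]

/-- A state on `A`: a positive linear functional with `g 1 = 1`. -/
def IsState (g : A →ₗ[ℂ] ℂ) : Prop := IsPosLF g ∧ g 1 = 1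

/-- The (algebraic) numerical radius `v(x) = sup {|g x| : g a state on A}`. -/
noncomputable def nr (x : A) : ℝ :=
  sSup {r : ℝ | ∃ g : A →ₗ[ℂ] ℂ, IsState g ∧ r = ‖g x‖}

/-- An Orlicz function: `φ : [0,∞) → [0,∞)` (modelled on `ℝ`) which is continuous, convex,
non-decreasing on `[0,∞)`, with `φ 0 = 0`, `φ u > 0` for `u > 0`, and `φ u → ∞` as `u → ∞`. -/
structure IsOrlicz (φ : ℝ → ℝ) : Prop where
  continuousOn : ContinuousOn φ (Set.Ici 0)
  convexOn : ConvexOn ℝ (Set.Ici 0) φ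
  monotoneOn : MonotoneOn φ (Set.Ici 0)
  map_zero : φ 0 = 0
  pos : ∀ u : ℝ, 0 < u → 0 < φ u
  tendsto_atTop : Filter.Tendsto φ Filter.atTop Filter.atTop

end

open Set

namespace ConvexOn

variable {S : Set ℝ} {φ : ℝ → ℝ}

theorem exists_affine_le_of_mem_interior (hφ : ConvexOn ℝ S φ) {x : ℝ} (hx : x ∈ interior S) :
    ∃ c : ℝ, ∀ t ∈ S, φ x + c * (t - x) ≤ φ t := by
  refine ⟨derivWithin φ (Ioi x) x, fun t ht => ?_⟩
  rcases lt_trichotomy t x with htx | rfl | hxt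
  · have hslope := hφ.slope_le_leftDeriv_of_mem_interior ht hx htx
    have hderiv := hφ.leftDeriv_le_rightDeriv_of_mem_interior hx
    rw [slope_def_field, div_le_iff₀ (sub_pos.2 htx)] at hslope
    nlinarith
  · simp
  · have hslope := hφ.rightDeriv_le_slope_of_mem_interior hx ht hxt
    rw [slope_def_field, le_div_iff₀ (sub_pos.2 hxt)] at hslope
    linarith

/-- At the endpoint `a` the right derivative may be `-∞`; monotonicity rules this out. -/
theorem exists_affine_le_of_monotoneOn {a t₀ : ℝ} (hφ : ConvexOn ℝ (Ici a) φ)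
    (hmono : MonotoneOn φ (Ici a)) (ht₀ : a ≤ t₀) :
    ∃ c : ℝ, ∀ t ∈ Ici a, φ t₀ + c * (t - t₀) ≤ φ t := by
  rcases ht₀.eq_or_lt with rfl | hlt
  · exact ⟨0, fun t ht => by simpa using hmono self_mem_Ici ht ht⟩
  · exact hφ.exists_affine_le_of_mem_interior (by rwa [interior_Ici])

end ConvexOn

namespace PositiveLinearMap

theorem norm_apply_star_mul_sq_le {B : Type*} [NonUnitalCStarAlgebra B] [PartialOrder B]
    [StarOrderedRing B] (f : B →ₚ[ℂ] ℂ) (a b : B) :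
    ‖f (star a * b)‖ ^ 2 ≤ (f (star a * a)).re * (f (star b * b)).re := by
  have hcs := norm_inner_le_norm (𝕜 := ℂ) (f.toPreGNS a) (f.toPreGNS b)
  rw [preGNS_inner_def, preGNS_norm_def, preGNS_norm_def] at hcs
  simp only [ofPreGNS_toPreGNS] at hcs
  have ha := (Complex.nonneg_iff.mp (f.map_nonneg (star_mul_self_nonneg a))).1
  have hb := (Complex.nonneg_iff.mp (f.map_nonneg (star_mul_self_nonneg b))).1
  calc ‖f (star a * b)‖ ^ 2 ≤ (√(f (star a * a)).re * √(f (star b * b)).re) ^ 2 := by gcongr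
    _ = _ := by rw [mul_pow, Real.sq_sqrt ha, Real.sq_sqrt hb]

variable {A : Type*} [CStarAlgebra A] [PartialOrder A] (f : A →ₚ[ℂ] ℂ)

theorem apply_algebraMap (hf : f 1 = 1) (r : ℝ) : f (algebraMap ℝ A r) = r := by
  rw [Algebra.algebraMap_eq_smul_one, ← Complex.coe_smul, map_smul, hf, smul_eq_mul, mul_one]

variable [StarOrderedRing A]

theorem norm_apply_sq_le (hf : f 1 = 1) (x : A) : ‖f x‖ ^ 2 ≤ (f (star x * x)).re := by
  simpa [hf] using f.norm_apply_star_mul_sq_le 1 x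

theorem re_apply_le_norm (hf : f 1 = 1) {a : A} (ha : IsSelfAdjoint a) : (f a).re ≤ ‖a‖ := by
  have hle := f.apply_le_of_isSelfAdjoint a ha
  rw [f.apply_algebraMap hf] at hle
  exact (Complex.le_def.mp hle).1

theorem norm_apply_le_norm (hf : f 1 = 1) (a : A) : ‖f a‖ ≤ ‖a‖ := by
  have hsq : ‖f a‖ ^ 2 ≤ ‖a‖ ^ 2 := calc
    ‖f a‖ ^ 2 ≤ (f (star a * a)).re := f.norm_apply_sq_le hf a
    _ ≤ ‖star a * a‖ := f.re_apply_le_norm hf (.star_mul_self a)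
    _ = ‖a‖ ^ 2 := by rw [CStarRing.norm_star_mul_self, sq]
  exact pow_le_pow_iff_left₀ (norm_nonneg _) (norm_nonneg _) two_ne_zero |>.mp hsq

/-- Jensen's inequality for states: a supporting line `ℓ ≤ φ` at `(f a).re` gives `ℓ(a) ≤ φ(a)`
by `cfc_mono`, and `f` commutes with affine functions because `f 1 = 1`. -/
theorem map_re_apply_le_re_apply_cfc {φ : ℝ → ℝ} (hconv : ConvexOn ℝ (Ici 0) φ)
    (hmono : MonotoneOn φ (Ici 0)) (hcont : ContinuousOn φ (Ici 0)) (hf : f 1 = 1) {a : A}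
    (ha : 0 ≤ a) :
    φ (f a).re ≤ (f (cfc φ a)).re := by
  set t₀ := (f a).re
  have hspec : spectrum ℝ a ⊆ Ici 0 := fun t ht => spectrum_nonneg_of_nonneg ha ht
  obtain ⟨c, hc⟩ := hconv.exists_affine_le_of_monotoneOn hmono
    (Complex.nonneg_iff.mp (f.map_nonneg ha)).1
  have hsupport : algebraMap ℝ A (φ t₀ - c * t₀) + c • a ≤ cfc φ a := by
    rw [← cfc_const_mul_id c a, ← cfc_const_add _ _ a]
    refine cfc_mono (fun t ht => ?_) (by fun_prop) (hcont.mono hspec)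
    linarith [hc t (hspec ht)]
  have hre := (Complex.le_def.mp (OrderHomClass.mono f hsupport)).1
  rw [map_add, f.apply_algebraMap hf, map_smul_of_tower, Complex.add_re, Complex.ofReal_re,
    Complex.real_smul, Complex.re_ofReal_mul] at hre
  linarith

end PositiveLinearMap

variable {A : Type*} [CStarAlgebra A] [PartialOrder A] [StarOrderedRing A]

noncomputable def IsPosLF.toPositiveLinearMap {g : A →ₗ[ℂ] ℂ} (hg : IsPosLF g) : A →ₚ[ℂ] ℂ :=
  .mk₀ g fun a ha => by
    obtain ⟨s, rfl⟩ := CStarAlgebra.nonneg_iff_eq_star_mul_self.mp ha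
    exact hg s

theorem IsOrlicz.map_norm_apply_sq_le {φ : ℝ → ℝ} (hφ : IsOrlicz φ) (f : A →ₚ[ℂ] ℂ)
    (hf : f 1 = 1) (x : A) {α : ℝ} (hα0 : 0 ≤ α) (hα1 : α ≤ 1) :
    φ (‖f x‖ ^ 2) ≤
      ‖(α : ℂ) • cfc φ (star x * x) + ((1 - α : ℝ) : ℂ) • cfc φ (x * star x)‖ := by
  set u := (f (star x * x)).re
  set w := (f (x * star x)).re
  have hu : 0 ≤ u := (Complex.nonneg_iff.mp (f.map_nonneg (star_mul_self_nonneg x))).1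
  have hw : 0 ≤ w := (Complex.nonneg_iff.mp (f.map_nonneg (mul_star_self_nonneg x))).1
  have hxu : ‖f x‖ ^ 2 ≤ u := f.norm_apply_sq_le hf x
  have hxw : ‖f x‖ ^ 2 ≤ w := by
    simpa [map_star] using f.norm_apply_sq_le hf (star x)
  have h1α : 0 ≤ 1 - α := sub_nonneg.2 hα1
  calc φ (‖f x‖ ^ 2) ≤ φ (α * u + (1 - α) * w) :=
        hφ.monotoneOn (mem_Ici.2 (sq_nonneg _)) (mem_Ici.2 (by positivity)) (by nlinarith)
    _ ≤ α * φ u + (1 - α) * φ w := hφ.convexOn.2 hu hw hα0 h1α (by ring)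
    _ ≤ α * (f (cfc φ (star x * x))).re + (1 - α) * (f (cfc φ (x * star x))).re := by
        gcongr
        · exact f.map_re_apply_le_re_apply_cfc hφ.convexOn hφ.monotoneOn hφ.continuousOn hf
            (star_mul_self_nonneg x)
        · exact f.map_re_apply_le_re_apply_cfc hφ.convexOn hφ.monotoneOn hφ.continuousOn hf
            (mul_star_self_nonneg x)
    _ = (f ((α : ℂ) • cfc φ (star x * x) + ((1 - α : ℝ) : ℂ) • cfc φ (x * star x))).re := by
        simp only [map_add, map_smul, smul_eq_mul, Complex.add_re, Complex.re_ofReal_mul]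
    _ ≤ ‖f ((α : ℂ) • cfc φ (star x * x) + ((1 - α : ℝ) : ℂ) • cfc φ (x * star x))‖ :=
        Complex.re_le_norm _
    _ ≤ _ := f.norm_apply_le_norm hf _

/-- `φ(v(x)²) ≤ ‖α φ(x* x) + (1-α) φ(x x*)‖`. -/
theorem stmt6 (x : A) (φ : ℝ → ℝ) (hφ : IsOrlicz φ)
    (α : ℝ) (hα0 : 0 ≤ α) (hα1 : α ≤ 1) :
    φ (nr x ^ 2) ≤
      ‖(α : ℂ) • cfc φ (star x * x) + ((1 - α : ℝ) : ℂ) • cfc φ (x * star x)‖ := by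
  set S := {r : ℝ | ∃ g : A →ₗ[ℂ] ℂ, IsState g ∧ r = ‖g x‖}
  rcases S.eq_empty_or_nonempty with hS | hS
  · -- only for `A` trivial, where `nr x = sSup ∅ = 0`
    simp [nr, S, hS, hφ.map_zero]
  have hbdd : BddAbove S := by
    refine ⟨‖x‖, ?_⟩
    rintro _ ⟨g, ⟨hg, hg1⟩, rfl⟩
    exact hg.toPositiveLinearMap.norm_apply_le_norm hg1 x
  have hcont : Continuous fun r : ℝ => φ (r ^ 2) :=
    hφ.continuousOn.comp_continuous (continuous_pow 2) sq_nonneg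
  refine closure_minimal ?_ (isClosed_le hcont continuous_const) (csSup_mem_closure hS hbdd)
  rintro _ ⟨g, ⟨hg, hg1⟩, rfl⟩
  exact hφ.map_norm_apply_sq_le hg.toPositiveLinearMap hg1 x hα0 hα1
end

section
/- Let A be a unital C*-algebra, x ∈ A, φ an Orlicz function, and 0 ≤ α ≤ 1. Then φ(v(x)²) ≤ (α/2)·φ(v(x²)) + ‖(α/4)·φ(x x*) + (1 − 3α/4)·φ(x*x)‖, where φ(x x*) and φ(x*x) are defined by continuous functional calculus on the positive elements x x* and x*x. -/
/-!
For a state `g`, Cauchy–Schwarz gives `|g x|² ≤ g (x⋆x)`. Applied instead to the real part of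
`c x`, where `|c| = 1` is chosen with `c · g x ≥ 0`, it gives
`|g x|² ≤ (2 v(x²) + g (x x⋆) + g (x⋆x)) / 4`. The convex combination of the two with weights
`α, 1 - α` bounds `|g x|²` by `(α/2) v(x²) + (α/4) g (x x⋆) + (1 - 3α/4) g (x⋆x)`. Applying the
monotone convex `φ`, then Jensen's inequality `φ (g p) ≤ g (φ p)` for `p ≥ 0` and `g a ≤ ‖a‖` for
self-adjoint `a`, bounds `φ (|g x|²)`; the supremum over states is handled by continuity of `φ`.
-/

open scoped ComplexOrder

section

variable {A : Type*} [CStarAlgebra A] [PartialOrder A] [StarOrderedRing A]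

lemma ConvexOn.add_rightDeriv_mul_sub_le {S : Set ℝ} {f : ℝ → ℝ} (hf : ConvexOn ℝ S f) {x y : ℝ}
    (hx : x ∈ interior S) (hy : y ∈ S) :
    f x + derivWithin f (Set.Ioi x) x * (y - x) ≤ f y := by
  rcases lt_trichotomy y x with hyx | rfl | hxy
  · have h := (hf.slope_le_leftDeriv_of_mem_interior hy hx hyx).trans
      (hf.leftDeriv_le_rightDeriv_of_mem_interior hx)
    rw [slope_def_field, div_le_iff₀ (sub_pos.mpr hyx)] at h
    linarith
  · simp
  · have h := hf.rightDeriv_le_slope_of_mem_interior hx hy hxy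
    rw [slope_def_field, le_div_iff₀ (sub_pos.mpr hxy)] at h
    linarith

lemma ConvexOn.exists_affine_le_of_monotoneOn_s11 {φ : ℝ → ℝ} (hconv : ConvexOn ℝ (Set.Ici 0) φ)
    (hmono : MonotoneOn φ (Set.Ici 0)) {t₀ : ℝ} (ht₀ : 0 ≤ t₀) :
    ∃ c : ℝ, ∀ t, 0 ≤ t → φ t₀ + c * (t - t₀) ≤ φ t := by
  rcases ht₀.eq_or_lt with rfl | ht₀
  · exact ⟨0, fun t ht ↦ by simpa using hmono Set.self_mem_Ici ht ht⟩
  · refine ⟨_, fun t ht ↦ hconv.add_rightDeriv_mul_sub_le ?_ ht⟩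
    rwa [interior_Ici]

lemma ConvexOn.map_add_add_le {s : Set ℝ} {φ : ℝ → ℝ} (hφ : ConvexOn ℝ s φ) {a b c u v w : ℝ}
    (ha : 0 ≤ a) (hb : 0 ≤ b) (hc : 0 ≤ c) (habc : a + b + c = 1)
    (hu : u ∈ s) (hv : v ∈ s) (hw : w ∈ s) :
    φ (a * u + b * v + c * w) ≤ a * φ u + b * φ v + c * φ w := by
  have := hφ.map_sum_le (t := Finset.univ) (w := ![a, b, c]) (p := ![u, v, w])
    (by intro i _; fin_cases i <;> assumption)
    (by simp [Fin.sum_univ_three, habc])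
    (by intro i _; fin_cases i <;> assumption)
  simpa [Fin.sum_univ_three] using this

lemma IsOrlicz.nonneg {φ : ℝ → ℝ} (hφ : IsOrlicz φ) {t : ℝ} (ht : 0 ≤ t) : 0 ≤ φ t :=
  hφ.map_zero ▸ hφ.monotoneOn Set.self_mem_Ici ht ht

variable {g : A →ₗ[ℂ] ℂ}

namespace IsState

lemma map_nonneg (hg : IsState g) {a : A} (ha : 0 ≤ a) : 0 ≤ g a := by
  rw [StarOrderedRing.nonneg_iff] at ha
  induction ha using AddSubmonoid.closure_induction with
  | mem _ h => obtain ⟨s, rfl⟩ := h; exact hg.1 s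
  | zero => rw [map_zero]
  | add _ _ _ _ ha hb => rw [map_add]; exact add_nonneg ha hb

noncomputable def toPositiveLinearMap (hg : IsState g) : A →ₚ[ℂ] ℂ :=
  .mk₀ g fun _ ↦ hg.map_nonneg

@[simp]
lemma toPositiveLinearMap_apply (hg : IsState g) (a : A) : hg.toPositiveLinearMap a = g a := rfl

lemma map_star (hg : IsState g) (a : A) : g (star a) = star (g a) :=
  StarHomClass.map_star hg.toPositiveLinearMap a

omit [PartialOrder A] [StarOrderedRing A] in
lemma map_algebraMap (hg : IsState g) (r : ℝ) : g (algebraMap ℝ A r) = r := by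
  rw [Algebra.algebraMap_eq_smul_one, ← Complex.coe_smul, map_smul, hg.2, smul_eq_mul, mul_one]

lemma mono (hg : IsState g) {a b : A} (hab : a ≤ b) : g a ≤ g b :=
  hg.toPositiveLinearMap.monotone' hab

lemma re_le_norm (hg : IsState g) {a : A} (ha : IsSelfAdjoint a) : (g a).re ≤ ‖a‖ := by
  have := hg.toPositiveLinearMap.apply_le_of_isSelfAdjoint a ha
  simp only [toPositiveLinearMap_apply, hg.map_algebraMap] at this
  exact (Complex.le_def.mp this).1

/-- Cauchy–Schwarz in the GNS pre-Hilbert space of `g`, applied to `1` and `x`. -/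
lemma norm_sq_le (hg : IsState g) (x : A) : ‖g x‖ ^ 2 ≤ (g (star x * x)).re := by
  set f := hg.toPositiveLinearMap
  have hinner : inner ℂ (f.toPreGNS 1) (f.toPreGNS x) = g x := by
    simp [f, f.preGNS_inner_def]
  have hone : ‖f.toPreGNS 1‖ = 1 := by simp [f, f.preGNS_norm_def, hg.2]
  have hx : ‖f.toPreGNS x‖ ^ 2 = (g (star x * x)).re := by
    rw [f.preGNS_norm_def]
    exact Real.sq_sqrt (Complex.nonneg_iff.mp (hg.1 x)).1
  calc ‖g x‖ ^ 2 ≤ (‖f.toPreGNS 1‖ * ‖f.toPreGNS x‖) ^ 2 := by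
        rw [← hinner]; gcongr; exact norm_inner_le_norm _ _
    _ = (g (star x * x)).re := by rw [hone, one_mul, hx]

lemma map_re_le_re_cfc (hg : IsState g) {φ : ℝ → ℝ} (hconv : ConvexOn ℝ (Set.Ici 0) φ)
    (hmono : MonotoneOn φ (Set.Ici 0)) (hcont : ContinuousOn φ (Set.Ici 0)) {p : A} (hp : 0 ≤ p) :
    φ (g p).re ≤ (g (cfc φ p)).re := by
  have hspec : spectrum ℝ p ⊆ Set.Ici 0 := fun t ht ↦ spectrum_nonneg_of_nonneg hp ht
  set t₀ := (g p).re
  have ht₀ : 0 ≤ t₀ := (Complex.nonneg_iff.mp (hg.map_nonneg hp)).1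
  obtain ⟨c, hc⟩ := hconv.exists_affine_le_of_monotoneOn_s11 hmono ht₀
  have haffine : algebraMap ℝ A (φ t₀ - c * t₀) + c • p ≤ cfc φ p :=
    calc _ = cfc (fun t ↦ (φ t₀ - c * t₀) + c * t) p := by
          rw [cfc_add p _ _, cfc_const _ p, cfc_const_mul _ _ p, cfc_id' ℝ p]
      _ ≤ cfc φ p :=
          cfc_mono (fun t ht ↦ by linarith [hc t (hspec ht)]) (hg := hcont.mono hspec)
  have hvalue : (g (algebraMap ℝ A (φ t₀ - c * t₀) + c • p)).re = φ t₀ := by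
    rw [map_add, hg.map_algebraMap, LinearMap.map_smul_of_tower, Complex.add_re, Complex.smul_re,
      Complex.ofReal_re, smul_eq_mul]
    ring
  simpa only [hvalue] using (Complex.le_def.mp (hg.mono haffine)).1

lemma re_sq_le (hg : IsState g) (y : A) :
    (g y).re ^ 2 ≤ (2 * (g (y * y)).re + (g (y * star y)).re + (g (star y * y)).re) / 4 := by
  set r : A := (2⁻¹ : ℝ) • (y + star y)
  have hsa : IsSelfAdjoint r := (IsSelfAdjoint.all _).smul (.add_star_self y)
  have hgr : g r = (g y).re := by
    simp only [r, LinearMap.map_smul_of_tower, map_add, hg.map_star, Complex.star_def,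
      Complex.add_conj, Complex.real_smul]
    push_cast
    ring
  have hrr : star r * r = (4⁻¹ : ℝ) • (y * y + y * star y + star y * y + star (y * y)) := by
    rw [hsa.star_eq, smul_mul_smul_comm, add_mul, mul_add, mul_add, star_mul,
      show (2⁻¹ : ℝ) * 2⁻¹ = 4⁻¹ by norm_num]
    congr 1
    abel
  have hcs := hg.norm_sq_le r
  rw [hgr, Complex.norm_real, Real.norm_eq_abs, sq_abs, hrr, LinearMap.map_smul_of_tower, map_add,
    map_add, map_add, hg.map_star (y * y)] at hcs
  simp only [Complex.smul_re, Complex.add_re, Complex.star_def, Complex.conj_re, smul_eq_mul] at hcs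
  linarith

lemma norm_apply_le (hg : IsState g) (x : A) : ‖g x‖ ≤ ‖x‖ := by
  have h := (hg.norm_sq_le x).trans (hg.re_le_norm (.star_mul_self x))
  rw [CStarRing.norm_star_mul_self, ← sq] at h
  exact (pow_le_pow_iff_left₀ (norm_nonneg _) (norm_nonneg _) two_ne_zero).mp h

end IsState

lemma bddAbove_norm_state_apply (x : A) :
    BddAbove {r : ℝ | ∃ g : A →ₗ[ℂ] ℂ, IsState g ∧ r = ‖g x‖} :=
  ⟨‖x‖, by rintro r ⟨g, hg, rfl⟩; exact hg.norm_apply_le x⟩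

lemma IsState.norm_apply_le_nr (hg : IsState g) (x : A) : ‖g x‖ ≤ nr x :=
  le_csSup (bddAbove_norm_state_apply x) ⟨g, hg, rfl⟩

omit [PartialOrder A] [StarOrderedRing A] in
lemma nr_nonneg (x : A) : 0 ≤ nr x :=
  Real.sSup_nonneg fun _ ⟨_, _, hr⟩ ↦ hr ▸ norm_nonneg _

lemma map_nr_le_of_forall_state (x : A) {ψ : ℝ → ℝ} (hψ : ContinuousOn ψ (Set.Ici 0)) {R : ℝ}
    (h0 : ψ 0 ≤ R) (h : ∀ g : A →ₗ[ℂ] ℂ, IsState g → ψ ‖g x‖ ≤ R) : ψ (nr x) ≤ R := by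
  set S := {r : ℝ | ∃ g : A →ₗ[ℂ] ℂ, IsState g ∧ r = ‖g x‖}
  rcases S.eq_empty_or_nonempty with hS | hS
  · -- no states (as when `A` is trivial), so `nr x = sSup ∅ = 0`
    rwa [show nr x = sSup S from rfl, hS, Real.sSup_empty]
  · have hclosed : IsClosed (Set.Ici 0 ∩ ψ ⁻¹' Set.Iic R) :=
      hψ.preimage_isClosed_of_isClosed isClosed_Ici isClosed_Iic
    have hsub : S ⊆ Set.Ici 0 ∩ ψ ⁻¹' Set.Iic R := by
      rintro _ ⟨g, hg, rfl⟩
      exact ⟨norm_nonneg _, h g hg⟩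
    exact (closure_minimal hsub hclosed (csSup_mem_closure hS (bddAbove_norm_state_apply x))).2

namespace IsState

lemma norm_sq_le_nr_mul_self (hg : IsState g) (x : A) :
    ‖g x‖ ^ 2 ≤ (2 * nr (x * x) + (g (x * star x)).re + (g (star x * x)).re) / 4 := by
  obtain ⟨c, hc1, hc⟩ := Complex.exists_norm_eq_mul_self (g x)
  have hcc : star c * c = 1 := by
    rw [Complex.star_def, Complex.conj_mul', hc1]; norm_num
  have hgy : (g (c • x)).re = ‖g x‖ := by rw [map_smul, smul_eq_mul, ← hc, Complex.ofReal_re]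
  have hyy : (c • x) * (c • x) = c ^ 2 • (x * x) := by rw [smul_mul_smul_comm, sq]
  have hyy' : (c • x) * star (c • x) = x * star x := by
    rw [star_smul, smul_mul_smul_comm, mul_comm, hcc, one_smul]
  have hy'y : star (c • x) * (c • x) = star x * x := by
    rw [star_smul, smul_mul_smul_comm, hcc, one_smul]
  have hsq : (g ((c • x) * (c • x))).re ≤ nr (x * x) :=
    calc _ ≤ ‖g ((c • x) * (c • x))‖ := Complex.re_le_norm _
      _ = ‖g (x * x)‖ := by rw [hyy, map_smul, norm_smul, norm_pow, hc1, one_pow, one_mul]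
      _ ≤ nr (x * x) := hg.norm_apply_le_nr _
  have := hg.re_sq_le (c • x)
  rw [hgy, hyy', hy'y] at this
  linarith

lemma norm_sq_le_interpolate (hg : IsState g) (x : A) {α : ℝ} (hα0 : 0 ≤ α)
    (hα1 : α ≤ 1) :
    ‖g x‖ ^ 2 ≤
      α / 2 * nr (x * x) + α / 4 * (g (x * star x)).re + (1 - 3 * α / 4) * (g (star x * x)).re := by
  have h1 := mul_le_mul_of_nonneg_left (hg.norm_sq_le_nr_mul_self x) hα0
  have h2 := mul_le_mul_of_nonneg_left (hg.norm_sq_le x) (sub_nonneg.mpr hα1)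
  linarith

lemma map_norm_apply_sq_le (hg : IsState g) (x : A) {φ : ℝ → ℝ} (hφ : IsOrlicz φ)
    {α : ℝ} (hα0 : 0 ≤ α) (hα1 : α ≤ 1) :
    φ (‖g x‖ ^ 2) ≤
      (α / 2) * φ (nr (x * x)) +
        ‖((α / 4 : ℝ) : ℂ) • cfc φ (x * star x) +
          ((1 - 3 * α / 4 : ℝ) : ℂ) • cfc φ (star x * x)‖ := by
  have hβ : 0 ≤ 1 - 3 * α / 4 := by linarith
  set N := nr (x * x)
  set G₁ := (g (x * star x)).re
  set G₂ := (g (star x * x)).re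
  set P := ((α / 4 : ℝ) : ℂ) • cfc φ (x * star x) + ((1 - 3 * α / 4 : ℝ) : ℂ) • cfc φ (star x * x)
  have hG₁ : 0 ≤ G₁ := (Complex.nonneg_iff.mp (hg.map_nonneg (mul_star_self_nonneg x))).1
  have hG₂ : 0 ≤ G₂ := (Complex.nonneg_iff.mp (hg.map_nonneg (star_mul_self_nonneg x))).1
  have hjensen {p : A} (hp : 0 ≤ p) : φ (g p).re ≤ (g (cfc φ p)).re :=
    hg.map_re_le_re_cfc hφ.convexOn hφ.monotoneOn hφ.continuousOn hp
  have hreal (r : ℝ) : IsSelfAdjoint (r : ℂ) := Complex.conj_ofReal r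
  have hPsa : IsSelfAdjoint P :=
    ((hreal _).smul (cfc_predicate φ _)).add ((hreal _).smul (cfc_predicate φ _))
  have hgP : (g P).re =
      α / 4 * (g (cfc φ (x * star x))).re + (1 - 3 * α / 4) * (g (cfc φ (star x * x))).re := by
    simp only [P, map_add, map_smul, smul_eq_mul, Complex.add_re, Complex.re_ofReal_mul]
  have hinterp := hg.norm_sq_le_interpolate x hα0 hα1
  calc φ (‖g x‖ ^ 2) ≤ φ (α / 2 * N + α / 4 * G₁ + (1 - 3 * α / 4) * G₂) :=
        hφ.monotoneOn (sq_nonneg (‖g x‖)) ((sq_nonneg _).trans hinterp) hinterp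
    _ ≤ α / 2 * φ N + α / 4 * φ G₁ + (1 - 3 * α / 4) * φ G₂ :=
        hφ.convexOn.map_add_add_le (by positivity) (by positivity) hβ (by ring) (nr_nonneg _)
          hG₁ hG₂
    _ ≤ α / 2 * φ N + α / 4 * (g (cfc φ (x * star x))).re +
          (1 - 3 * α / 4) * (g (cfc φ (star x * x))).re := by
        gcongr
        exacts [hjensen (mul_star_self_nonneg x), hjensen (star_mul_self_nonneg x)]
    _ = α / 2 * φ N + (g P).re := by rw [hgP, add_assoc]
    _ ≤ α / 2 * φ N + ‖P‖ := by grw [hg.re_le_norm hPsa]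

end IsState

/-- `φ(v(x)²) ≤ (α/2) φ(v(x²)) + ‖(α/4) φ(x x*) + (1 - 3α/4) φ(x* x)‖`. -/
theorem stmt11 (x : A) (φ : ℝ → ℝ) (hφ : IsOrlicz φ)
    (α : ℝ) (hα0 : 0 ≤ α) (hα1 : α ≤ 1) :
    φ (nr x ^ 2) ≤
      (α / 2) * φ (nr (x * x)) +
        ‖((α / 4 : ℝ) : ℂ) • cfc φ (x * star x) +
          ((1 - 3 * α / 4 : ℝ) : ℂ) • cfc φ (star x * x)‖ := by
  refine map_nr_le_of_forall_state x (ψ := fun t ↦ φ (t ^ 2)) ?_ ?_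
    fun g hg ↦ hg.map_norm_apply_sq_le x hφ hα0 hα1
  · exact hφ.continuousOn.comp (continuous_pow 2).continuousOn fun t _ ↦ sq_nonneg t
  · have := hφ.nonneg (nr_nonneg (x * x))
    rw [zero_pow two_ne_zero, hφ.map_zero]
    positivity

end
end

section
/- Let A be a unital C*-algebra, a a nonzero positive element of A, φ an Orlicz function, and x_1,…,x_n ∈ A each admitting an a-adjoint x_i^{#a}, with ‖x_i‖_a and ‖x_i^{#a}‖_a finite for all i. Let p_1,…,p_n ≥ 0 with Σ_{i=1}^n p_i = 1. Then φ(v_a(Σ_{i=1}^n p_i x_i)²) ≤ (1/2)·φ(v_a(Σ_{i=1}^n p_i x_i²)) + (1/2)·φ(‖Σ_{i=1}^n p_i x_i^{#a} x_i‖_a^{1/2} · ‖Σ_{i=1}^n p_i x_i x_i^{#a}‖_a^{1/2}). -/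
open scoped ComplexOrder

section

variable {A : Type*} [CStarAlgebra A] [PartialOrder A] [StarOrderedRing A]

/-- The `a`-numerical radius `vₐ(x) = sup {|f(a x)| : f ∈ S_a(A)}`. -/
noncomputable def aNR (a x : A) : ℝ :=
  sSup {r : ℝ | ∃ f : A →ₗ[ℂ] ℂ, MemSa a f ∧ r = ‖f (a * x)‖}

/-!
For `f ∈ S_a(A)` write `a = s* s`. Then `(u, v) ↦ ∑ pᵢ f(uᵢ* a vᵢ)` is the GNS inner product of
the positive functional `u ↦ ∑ pᵢ f(uᵢ)` on `Aⁿ`, evaluated at `s u` and `s v`. For it,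
`e = (1, …, 1)` is a unit vector and, writing `x♯ = (xᵢ^{#a})ᵢ`, the `a`-adjoint relation gives
`⟨x♯, e⟩ = ⟨e, x⟩ = f(a ∑ pᵢ xᵢ)`, `⟨x♯, x⟩ = f(a ∑ pᵢ xᵢ²)`, `‖x‖² = f(a ∑ pᵢ xᵢ^{#a} xᵢ)` and
`‖x♯‖² = f(a ∑ pᵢ xᵢ xᵢ^{#a})`. Buzano's inequality `|⟨u, e⟩ ⟨e, v⟩| ≤ (‖u‖ ‖v‖ + |⟨u, v⟩|) / 2`
therefore bounds `|f(a ∑ pᵢ xᵢ)|²`; taking the supremum over `f` and using that `φ` is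
non-decreasing and convex gives the claim.

Since `sSup` of an unbounded set of reals is `0`, the seminorms on the right must be shown finite:
this follows from `‖y z‖ₐ ≤ ‖y‖ₐ ‖z‖ₐ` for `y` with an `a`-adjoint, obtained by passing to the
functional `c ↦ f(z* c z) / f(z* a z)`, which lies in `S_a(A)` unless `z` is `f`-null.
-/

open scoped InnerProductSpace

theorem norm_inner_mul_inner_le_of_norm_eq_one {𝕜 E : Type*} [RCLike 𝕜] [SeminormedAddCommGroup E]
    [InnerProductSpace 𝕜 E] {e : E} (he : ‖e‖ = 1) (x y : E) :
    ‖⟪x, e⟫_𝕜 * ⟪e, y⟫_𝕜‖ ≤ (‖x‖ * ‖y‖ + ‖⟪x, y⟫_𝕜‖) / 2 := by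
  -- `w` is the reflection of `x` in the line through `e`, so `‖w‖ = ‖x‖`.
  set w : E := (2 * ⟪e, x⟫_𝕜) • e - x
  have hw : ‖w‖ = ‖x‖ := by
    have : ‖w‖ ^ 2 = ‖x‖ ^ 2 := by
      rw [norm_sub_sq (𝕜 := 𝕜), norm_smul, inner_smul_left, he, mul_one, map_mul (starRingEnd 𝕜),
        map_ofNat, mul_assoc, RCLike.conj_mul, norm_mul, RCLike.norm_two, ← RCLike.ofReal_pow,
        RCLike.ofNat_mul_re, RCLike.ofReal_re]
      ring
    exact (pow_left_inj₀ (norm_nonneg _) (norm_nonneg _) two_ne_zero).mp this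
  have hwy : ⟪w, y⟫_𝕜 = 2 * (⟪x, e⟫_𝕜 * ⟪e, y⟫_𝕜) - ⟪x, y⟫_𝕜 := by
    rw [inner_sub_left, inner_smul_left, map_mul, inner_conj_symm, map_ofNat]; ring
  calc ‖⟪x, e⟫_𝕜 * ⟪e, y⟫_𝕜‖ = ‖⟪w, y⟫_𝕜 + ⟪x, y⟫_𝕜‖ / 2 := by
        rw [hwy, sub_add_cancel, norm_mul _ (_ * _), RCLike.norm_two]; ring
    _ ≤ (‖w‖ * ‖y‖ + ‖⟪x, y⟫_𝕜‖) / 2 := by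
        gcongr; exact (norm_add_le _ _).trans (by gcongr; exact norm_inner_le_norm w y)
    _ = (‖x‖ * ‖y‖ + ‖⟪x, y⟫_𝕜‖) / 2 := by rw [hw]

lemma PositiveLinearMap.inner_toPreGNS_mul {B : Type*} [NonUnitalCStarAlgebra B] [PartialOrder B]
    [StarOrderedRing B] (g : B →ₚ[ℂ] ℂ) (s x y : B) :
    ⟪g.toPreGNS (s * x), g.toPreGNS (s * y)⟫_ℂ = g (star x * (star s * s) * y) := by
  rw [preGNS_inner_def, ofPreGNS_toPreGNS, ofPreGNS_toPreGNS, star_mul]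
  simp only [mul_assoc]

lemma PositiveLinearMap.norm_toPreGNS_mul {B : Type*} [NonUnitalCStarAlgebra B] [PartialOrder B]
    [StarOrderedRing B] (g : B →ₚ[ℂ] ℂ) (s x : B) :
    ‖g.toPreGNS (s * x)‖ = √(g (star x * (star s * s) * x)).re := by
  rw [preGNS_norm_def, ofPreGNS_toPreGNS, star_mul]
  simp only [mul_assoc]

namespace IsPosLF

variable {f : A →ₗ[ℂ] ℂ} (hf : IsPosLF f)
include hf

lemma map_nonneg_s14 {x : A} (hx : 0 ≤ x) : 0 ≤ f x := by
  obtain ⟨b, rfl⟩ := CStarAlgebra.nonneg_iff_eq_star_mul_self.mp hx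
  exact hf b

noncomputable def toPositiveLinearMap_s14 : A →ₚ[ℂ] ℂ := .mk₀ f fun _ => hf.map_nonneg_s14

noncomputable def gnsVec (s : A) : A →ₗ[ℂ] hf.toPositiveLinearMap_s14.PreGNS :=
  hf.toPositiveLinearMap_s14.toPreGNS.toLinearMap ∘ₗ LinearMap.mulLeft ℂ s

lemma inner_gnsVec (s x y : A) :
    ⟪hf.gnsVec s x, hf.gnsVec s y⟫_ℂ = f (star x * (star s * s) * y) :=
  hf.toPositiveLinearMap_s14.inner_toPreGNS_mul s x y

lemma norm_gnsVec (s x : A) : ‖hf.gnsVec s x‖ = √(f (star x * (star s * s) * x)).re :=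
  hf.toPositiveLinearMap_s14.norm_toPreGNS_mul s x

variable {a : A} (ha : 0 ≤ a)
include ha

lemma apply_star_mul_mul_nonneg (x : A) : 0 ≤ f (star x * a * x) :=
  hf.map_nonneg_s14 (star_left_conjugate_nonneg ha x)

lemma norm_apply_star_mul_mul_le (x y : A) :
    ‖f (star x * a * y)‖ ≤ √(f (star x * a * x)).re * √(f (star y * a * y)).re := by
  obtain ⟨s, rfl⟩ := CStarAlgebra.nonneg_iff_eq_star_mul_self.mp ha
  rw [← hf.inner_gnsVec, ← hf.norm_gnsVec, ← hf.norm_gnsVec]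
  exact norm_inner_le_norm _ _

lemma sqrt_re_apply_sum_le {ι : Type*} (t : Finset ι) (c : ι → ℂ) (y : ι → A) :
    √(f (star (∑ i ∈ t, c i • y i) * a * ∑ i ∈ t, c i • y i)).re ≤
      ∑ i ∈ t, ‖c i‖ * √(f (star (y i) * a * y i)).re := by
  obtain ⟨s, rfl⟩ := CStarAlgebra.nonneg_iff_eq_star_mul_self.mp ha
  simp only [← hf.norm_gnsVec, map_sum, map_smul, ← norm_smul]
  exact norm_sum_le _ _

end IsPosLF

section

omit [PartialOrder A] [StarOrderedRing A]

variable {a : A} {f : A →ₗ[ℂ] ℂ}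

lemma IsPosLF.sum_smul_comp_proj {ι : Type*} [Fintype ι] (hf : IsPosLF f) {p : ι → ℝ}
    (hp : ∀ i, 0 ≤ p i) :
    IsPosLF (∑ i, (p i : ℂ) • f ∘ₗ LinearMap.proj i : (ι → A) →ₗ[ℂ] ℂ) := fun u => by
  simp only [LinearMap.sum_apply, LinearMap.smul_apply, LinearMap.comp_apply,
    LinearMap.coe_proj, Function.eval, Pi.mul_apply, Pi.star_apply, smul_eq_mul]
  exact Finset.sum_nonneg fun i _ => mul_nonneg (by exact_mod_cast hp i) (hf (u i))

lemma aNorm_nonneg (a x : A) : 0 ≤ aNorm a x :=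
  Real.sSup_nonneg fun _ ⟨_, _, hr⟩ => hr ▸ Real.sqrt_nonneg _

lemma sqrt_re_le_aNorm {x : A} (hx : BddAbove (aNormSet a x)) (hf : MemSa a f) :
    √(f (star x * a * x)).re ≤ aNorm a x :=
  le_csSup hx ⟨f, hf, rfl⟩

lemma bddAbove_aNormSet_of_forall_le {x : A} {M : ℝ}
    (h : ∀ f : A →ₗ[ℂ] ℂ, MemSa a f → √(f (star x * a * x)).re ≤ M) :
    BddAbove (aNormSet a x) :=
  ⟨M, fun _ ⟨f, hf, hr⟩ => hr ▸ h f hf⟩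

lemma aNR_nonneg (a x : A) : 0 ≤ aNR a x :=
  Real.sSup_nonneg fun _ ⟨_, _, hr⟩ => hr ▸ norm_nonneg _

lemma aNR_sq_le_of_forall_sq_le {x : A} {M : ℝ} (hM : 0 ≤ M)
    (h : ∀ f : A →ₗ[ℂ] ℂ, MemSa a f → ‖f (a * x)‖ ^ 2 ≤ M) : aNR a x ^ 2 ≤ M := by
  have hle : aNR a x ≤ √M :=
    Real.sSup_le (fun _ ⟨f, hf, hr⟩ => hr ▸ (Real.le_sqrt (norm_nonneg _) hM).mpr (h f hf))
      (Real.sqrt_nonneg M)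
  exact (pow_le_pow_left₀ (aNR_nonneg a x) hle 2).trans (Real.sq_sqrt hM).le

end

section

variable {a : A} {f : A →ₗ[ℂ] ℂ}

lemma mul_eq_star_mul_of_mul_eq_star_mul (ha : 0 ≤ a) {y w : A} (h : a * w = star y * a) :
    a * y = star w * a := by
  simpa [(IsSelfAdjoint.of_nonneg ha).star_eq] using (congrArg star h).symm

lemma MemSa.norm_apply_mul_le (ha : 0 ≤ a) (hf : MemSa a f) (x : A) :
    ‖f (a * x)‖ ≤ √(f (star x * a * x)).re := by
  simpa [hf.2] using hf.1.norm_apply_star_mul_mul_le ha 1 x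

lemma MemSa.comp_conj (ha : 0 ≤ a) (hf : MemSa a f) {z : A} (hz : f (star z * a * z) ≠ 0) :
    MemSa a ((f (star z * a * z))⁻¹ •
      f ∘ₗ LinearMap.mulRight ℂ z ∘ₗ LinearMap.mulLeft ℂ (star z)) := by
  refine ⟨fun c => ?_, ?_⟩
  · simp only [LinearMap.smul_apply, LinearMap.comp_apply, LinearMap.mulLeft_apply,
      LinearMap.mulRight_apply, smul_eq_mul]
    exact mul_nonneg (inv_nonneg.mpr (hf.1.apply_star_mul_mul_nonneg ha z))
      (hf.1.map_nonneg_s14 (star_left_conjugate_nonneg (star_mul_self_nonneg c) z))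
  · simp [inv_mul_cancel₀ hz]

lemma bddAbove_aNormSet_sum (ha : 0 ≤ a) {ι : Type*} (t : Finset ι) (c : ι → ℂ) {y : ι → A}
    (hy : ∀ i ∈ t, BddAbove (aNormSet a (y i))) :
    BddAbove (aNormSet a (∑ i ∈ t, c i • y i)) :=
  bddAbove_aNormSet_of_forall_le fun _ hf => (hf.1.sqrt_re_apply_sum_le ha t c y).trans <|
    Finset.sum_le_sum fun i hi =>
      mul_le_mul_of_nonneg_left (sqrt_re_le_aNorm (hy i hi) hf) (norm_nonneg _)

lemma bddAbove_aNormSet_mul (ha : 0 ≤ a) {y z w : A} (hw : a * w = star y * a)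
    (hy : BddAbove (aNormSet a y)) (hz : BddAbove (aNormSet a z)) :
    BddAbove (aNormSet a (y * z)) := by
  refine bddAbove_aNormSet_of_forall_le (M := aNorm a z * aNorm a y) fun f hf => ?_
  by_cases ht : f (star z * a * z) = 0
  · -- Then `z` is `f`-null, and `(y z)* a (y z) = z* a (w y z)`.
    have hnull : f (star (y * z) * a * (y * z)) = 0 := by
      have hcs := hf.1.norm_apply_star_mul_mul_le ha z (w * (y * z))
      rw [ht, Complex.zero_re, Real.sqrt_zero, zero_mul, norm_le_zero_iff] at hcs
      have hrw : star (y * z) * a * (y * z) = star z * a * (w * (y * z)) := by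
        simp only [star_mul, mul_assoc]
        rw [← mul_assoc a w, hw, mul_assoc]
      rwa [hrw]
    rw [hnull, Complex.zero_re, Real.sqrt_zero]
    exact mul_nonneg (aNorm_nonneg a z) (aNorm_nonneg a y)
  · have hg := hf.comp_conj ha ht
    have hyz : f (star (y * z) * a * (y * z)) = f (star z * a * z) *
        ((f (star z * a * z))⁻¹ • f ∘ₗ LinearMap.mulRight ℂ z ∘ₗ LinearMap.mulLeft ℂ (star z))
          (star y * a * y) := by
      simp [← mul_assoc, mul_inv_cancel₀ ht, star_mul]
    obtain ⟨ht_re, ht_im⟩ := Complex.nonneg_iff.mp (hf.1.apply_star_mul_mul_nonneg ha z)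
    rw [hyz, Complex.mul_re, ← ht_im, zero_mul, sub_zero, Real.sqrt_mul ht_re]
    exact mul_le_mul (sqrt_re_le_aNorm hz hf) (sqrt_re_le_aNorm hy hg) (Real.sqrt_nonneg _)
      (aNorm_nonneg a z)

theorem MemSa.norm_apply_mul_sum_sq_le (ha : 0 ≤ a) (hf : MemSa a f) {ι : Type*} [Fintype ι]
    {x xadj : ι → A} (hadj : ∀ i, a * xadj i = star (x i) * a) {p : ι → ℝ}
    (hp : ∀ i, 0 ≤ p i) (hp1 : ∑ i, p i = 1) :
    ‖f (a * ∑ i, (p i : ℂ) • x i)‖ ^ 2 ≤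
      (√(f (a * ∑ i, (p i : ℂ) • (xadj i * x i))).re *
          √(f (a * ∑ i, (p i : ℂ) • (x i * xadj i))).re +
        ‖f (a * ∑ i, (p i : ℂ) • (x i * x i))‖) / 2 := by
  obtain ⟨s, hs⟩ := CStarAlgebra.nonneg_iff_eq_star_mul_self.mp ha
  have hadj' (i : ι) : star (xadj i) * a = a * x i :=
    (mul_eq_star_mul_of_mul_eq_star_mul ha (hadj i)).symm
  have hf_sum (y : ι → A) : f (a * ∑ i, (p i : ℂ) • y i) = ∑ i, (p i : ℂ) * f (a * y i) := by
    simp [Finset.mul_sum]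
  -- Buzano's inequality in the GNS space of `u ↦ ∑ pᵢ f (uᵢ)` on `ι → A`.
  have hG := hf.1.sum_smul_comp_proj hp
  let v := hG.gnsVec (fun _ => s)
  have hinner (u w : ι → A) : ⟪v u, v w⟫_ℂ = ∑ i, (p i : ℂ) * f (star (u i) * a * w i) := by
    simp [v, hG.inner_gnsVec, hs]
  have hnorm (u : ι → A) : ‖v u‖ = √(∑ i, (p i : ℂ) * f (star (u i) * a * u i)).re := by
    simp [v, hG.norm_gnsVec, hs]
  have he : ‖v 1‖ = 1 := by
    simp [hnorm, hf.2, ← Complex.ofReal_sum, hp1]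
  have hbuz := norm_inner_mul_inner_le_of_norm_eq_one (𝕜 := ℂ) he (v xadj) (v x)
  rw [hinner, hinner, hinner, hnorm, hnorm] at hbuz
  simp only [Pi.one_apply, star_one, one_mul, mul_one, hadj', ← hadj] at hbuz
  simp only [mul_assoc, ← hf_sum] at hbuz
  rw [norm_mul, ← sq] at hbuz
  exact hbuz.trans_eq (by ring)

lemma MemSa.norm_apply_mul_le_aNR (ha : 0 ≤ a) (hf : MemSa a f) {x : A}
    (hx : BddAbove (aNormSet a x)) : ‖f (a * x)‖ ≤ aNR a x :=
  le_csSup ⟨aNorm a x, fun _ ⟨_, hg, hr⟩ => hr ▸ (hg.norm_apply_mul_le ha x).trans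
    (sqrt_re_le_aNorm hx hg)⟩ ⟨f, hf, rfl⟩

lemma MemSa.sqrt_re_apply_mul_le (ha : 0 ≤ a) (hf : MemSa a f) {x : A}
    (hx : BddAbove (aNormSet a x)) : √(f (a * x)).re ≤ aNorm a x ^ ((1 : ℝ) / 2) := by
  rw [← Real.sqrt_eq_rpow]
  exact Real.sqrt_le_sqrt <| (Complex.re_le_norm _).trans <|
    (hf.norm_apply_mul_le ha x).trans (sqrt_re_le_aNorm hx hf)

theorem aNR_sum_sq_le (ha : 0 ≤ a) {ι : Type*} [Fintype ι] {x xadj : ι → A}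
    (hadj : ∀ i, a * xadj i = star (x i) * a) (hx : ∀ i, BddAbove (aNormSet a (x i)))
    (hxa : ∀ i, BddAbove (aNormSet a (xadj i))) {p : ι → ℝ} (hp : ∀ i, 0 ≤ p i)
    (hp1 : ∑ i, p i = 1) :
    aNR a (∑ i, (p i : ℂ) • x i) ^ 2 ≤
      (aNorm a (∑ i, (p i : ℂ) • (xadj i * x i)) ^ ((1 : ℝ) / 2) *
          aNorm a (∑ i, (p i : ℂ) • (x i * xadj i)) ^ ((1 : ℝ) / 2) +
        aNR a (∑ i, (p i : ℂ) • (x i * x i))) / 2 := by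
  have hadj' (i : ι) : a * x i = star (xadj i) * a :=
    mul_eq_star_mul_of_mul_eq_star_mul ha (hadj i)
  have hZ₁ := bddAbove_aNormSet_sum ha Finset.univ (fun i => (p i : ℂ))
    fun i _ => bddAbove_aNormSet_mul ha (hadj' i) (hxa i) (hx i)
  have hZ₂ := bddAbove_aNormSet_sum ha Finset.univ (fun i => (p i : ℂ))
    fun i _ => bddAbove_aNormSet_mul ha (hadj i) (hx i) (hxa i)
  have hQ := bddAbove_aNormSet_sum ha Finset.univ (fun i => (p i : ℂ))
    fun i _ => bddAbove_aNormSet_mul ha (hadj i) (hx i) (hx i)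
  refine aNR_sq_le_of_forall_sq_le ?_ fun f hf =>
    (hf.norm_apply_mul_sum_sq_le ha hadj hp hp1).trans ?_
  · exact div_nonneg (add_nonneg (mul_nonneg (Real.rpow_nonneg (aNorm_nonneg _ _) _)
      (Real.rpow_nonneg (aNorm_nonneg _ _) _)) (aNR_nonneg _ _)) zero_le_two
  have hZ := mul_le_mul (hf.sqrt_re_apply_mul_le ha hZ₁) (hf.sqrt_re_apply_mul_le ha hZ₂)
    (Real.sqrt_nonneg _) (Real.rpow_nonneg (aNorm_nonneg _ _) _)
  linarith [hf.norm_apply_mul_le_aNR ha hQ]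

end

lemma IsOrlicz.le_half_add_half {φ : ℝ → ℝ} (hφ : IsOrlicz φ) {t u v : ℝ} (ht : 0 ≤ t)
    (hu : 0 ≤ u) (hv : 0 ≤ v) (h : t ≤ (u + v) / 2) :
    φ t ≤ 1 / 2 * φ u + 1 / 2 * φ v := by
  calc φ t ≤ φ ((1 / 2 : ℝ) • u + (1 / 2 : ℝ) • v) :=
        hφ.monotoneOn ht (by simp only [smul_eq_mul, Set.mem_Ici]; positivity)
          (by simp only [smul_eq_mul]; linarith)
    _ ≤ (1 / 2 : ℝ) • φ u + (1 / 2 : ℝ) • φ v :=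
        hφ.convexOn.2 hu hv (by norm_num) (by norm_num) (by norm_num)
    _ = 1 / 2 * φ u + 1 / 2 * φ v := by simp only [smul_eq_mul]

theorem stmt14_general (a : A) (ha : 0 ≤ a)
    (n : ℕ) (x xadj : Fin n → A) (hadj : ∀ i, a * xadj i = star (x i) * a)
    (hx : ∀ i, BddAbove (aNormSet a (x i))) (hxa : ∀ i, BddAbove (aNormSet a (xadj i)))
    (p : Fin n → ℝ) (hp : ∀ i, 0 ≤ p i) (hp1 : ∑ i, p i = 1)
    (φ : ℝ → ℝ) (hφ : IsOrlicz φ) :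
    φ (aNR a (∑ i, (p i : ℂ) • x i) ^ 2) ≤
      (1 / 2) * φ (aNR a (∑ i, (p i : ℂ) • (x i * x i))) +
        (1 / 2) * φ ((aNorm a (∑ i, (p i : ℂ) • (xadj i * x i))) ^ ((1 : ℝ) / 2) *
          (aNorm a (∑ i, (p i : ℂ) • (x i * xadj i))) ^ ((1 : ℝ) / 2)) := by
  refine hφ.le_half_add_half (sq_nonneg _) (aNR_nonneg _ _) ?_ ?_
  · exact mul_nonneg (Real.rpow_nonneg (aNorm_nonneg _ _) _)
      (Real.rpow_nonneg (aNorm_nonneg _ _) _)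
  · rw [add_comm]
    exact aNR_sum_sq_le ha hadj hx hxa hp hp1

/-- Orlicz-function bound for the `a`-numerical radius of a convex
combination. -/
theorem stmt14 (a : A) (ha : 0 ≤ a) (ha0 : a ≠ 0)
    (n : ℕ) (x xadj : Fin n → A) (hadj : ∀ i, a * xadj i = star (x i) * a)
    (hx : ∀ i, BddAbove (aNormSet a (x i))) (hxa : ∀ i, BddAbove (aNormSet a (xadj i)))
    (p : Fin n → ℝ) (hp : ∀ i, 0 ≤ p i) (hp1 : ∑ i, p i = 1)
    (φ : ℝ → ℝ) (hφ : IsOrlicz φ) :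
    φ (aNR a (∑ i, (p i : ℂ) • x i) ^ 2) ≤
      (1 / 2) * φ (aNR a (∑ i, (p i : ℂ) • (x i * x i))) +
        (1 / 2) * φ ((aNorm a (∑ i, (p i : ℂ) • (xadj i * x i))) ^ ((1 : ℝ) / 2) *
          (aNorm a (∑ i, (p i : ℂ) • (x i * xadj i))) ^ ((1 : ℝ) / 2)) :=
  stmt14_general a ha n x xadj hadj hx hxa p hp hp1 φ hφ

end
end
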